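/- MacWilliams identity: for a linear code C ⊆ F_p^n with dual C^⊥, the complete weight enumerators satisfy W_{C^⊥}({x_a}) = (1/|C|) · W_C({x̃_a}), where x̃_a = Σ_{b ∈ F_p} e^{2πi ab/p} x_b. -/

import Mathlib

/-!
Write `ψ` for the standard additive character `a ↦ exp (2πi a / p)` of `ZMod p`. Expanding the
product `∏ᵢ x̃_{cᵢ}` over all choices `v` gives `∑ᵥ ψ (c ⬝ᵥ v) ∏ᵢ x_{vᵢ}`, so summing over `c ∈ C`
turns `W_C(x̃)` into `∑ᵥ (∑_{c ∈ C} ψ (c ⬝ᵥ v)) ∏ᵢ x_{vᵢ}`. The inner sum is a character sum over the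
group `C`: it is `|C|` when `v ∈ C^⊥` and vanishes otherwise, because if `c ⬝ᵥ v ≠ 0` then some
multiple `s • c ∈ C` already has `ψ ((s • c) ⬝ᵥ v) ≠ 1` (`ψ` is primitive). The argument works over
any finite commutative ring carrying a primitive character.
-/

open scoped BigOperators

/-- Dual code `C^⊥`. -/
def dualCode (p n : ℕ) (C : Set (Fin n → ZMod p)) : Set (Fin n → ZMod p) :=
  {c' | ∀ c ∈ C, ∑ i, c i * c' i = 0}

/-- `wt_a(c) = |{ i : c_i = a }|`. -/
def wtA {p n : ℕ} (a : ZMod p) (c : Fin n → ZMod p) : ℕ :=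
  (Finset.univ.filter fun i => c i = a).card

open Classical in
/-- Complete weight enumerator `W_C({x_a}) = Σ_{c ∈ C} Π_a x_a^{wt_a(c)}`. -/
noncomputable def cwe (p n : ℕ) [NeZero p] (C : Set (Fin n → ZMod p)) (x : ZMod p → ℂ) : ℂ :=
  ∑ c ∈ Finset.univ.filter (fun c => c ∈ C), ∏ a : ZMod p, x a ^ wtA a c

open Finset

lemma AddChar.map_sum_eq_prod {A M ι : Type*} [AddCommMonoid A] [CommMonoid M] (ψ : AddChar A M)
    (s : Finset ι) (f : ι → A) : ψ (∑ i ∈ s, f i) = ∏ i ∈ s, ψ (f i) := by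
  classical
  induction s using Finset.induction_on with
  | empty => simp
  | insert i s hi ih => rw [sum_insert hi, prod_insert hi, AddChar.map_add_eq_mul, ih]

section Fourier

variable {R ι : Type*} [CommRing R] [Fintype ι]

lemma sum_addChar_dotProduct_submodule {ψ : AddChar R ℂ} (hψ : ψ.IsPrimitive)
    (C : Submodule R (ι → R)) [Fintype C] (v : ι → R) [Decidable (∀ c ∈ C, c ⬝ᵥ v = 0)] :
    ∑ c : C, ψ ((c : ι → R) ⬝ᵥ v) = if ∀ c ∈ C, c ⬝ᵥ v = 0 then (Nat.card C : ℂ) else 0 := by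
  classical
  let χ : AddChar C ℂ :=
    ψ.compAddMonoidHom (((dotProductBilin R R).flip v).toAddMonoidHom.comp C.subtype.toAddMonoidHom)
  have hχ : χ = 0 ↔ ∀ c ∈ C, c ⬝ᵥ v = 0 := by
    constructor
    · intro h c hc
      by_contra hcv
      obtain ⟨s, hs⟩ := AddChar.ne_one_iff.mp (hψ hcv)
      apply hs
      simpa [χ, smul_dotProduct, mul_comm] using DFunLike.congr_fun h ⟨s • c, C.smul_mem s hc⟩
    · intro h
      ext c
      simp [χ, h c c.2]
  change ∑ c, χ c = _
  rw [AddChar.sum_eq_ite, Nat.card_eq_fintype_card]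
  exact if_congr hχ rfl rfl

variable [Fintype R] [DecidableEq ι]

/-- The substitution `x ↦ x̃` of the MacWilliams identity. -/
def charTransform (ψ : AddChar R ℂ) (x : R → ℂ) (a : R) : ℂ := ∑ b, ψ (a * b) * x b

open Classical in
theorem sum_prod_charTransform {ψ : AddChar R ℂ} (hψ : ψ.IsPrimitive)
    (C : Submodule R (ι → R)) [Fintype C] (x : R → ℂ) :
    ∑ c : C, ∏ i, charTransform ψ x ((c : ι → R) i) =
      Nat.card C * ∑ v ∈ univ.filter (fun v => ∀ c ∈ C, c ⬝ᵥ v = 0), ∏ i, x (v i) := by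
  have expand (c : ι → R) :
      ∏ i, charTransform ψ x (c i) = ∑ v : ι → R, ψ (c ⬝ᵥ v) * ∏ i, x (v i) := by
    simp only [charTransform, Fintype.prod_sum, dotProduct, AddChar.map_sum_eq_prod,
      prod_mul_distrib]
  calc ∑ c : C, ∏ i, charTransform ψ x ((c : ι → R) i)
      = ∑ v : ι → R, (∑ c : C, ψ ((c : ι → R) ⬝ᵥ v)) * ∏ i, x (v i) := by
        simp only [expand, sum_mul]
        exact sum_comm
    _ = ∑ v : ι → R, if ∀ c ∈ C, c ⬝ᵥ v = 0 then Nat.card C * ∏ i, x (v i) else 0 := by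
        simp only [sum_addChar_dotProduct_submodule hψ, ite_mul, zero_mul]
    _ = _ := by simp only [sum_filter, mul_sum, mul_ite, mul_zero]

end Fourier

lemma mem_dualCode_iff {p n : ℕ} {C : Set (Fin n → ZMod p)} {v : Fin n → ZMod p} :
    v ∈ dualCode p n C ↔ ∀ c ∈ C, c ⬝ᵥ v = 0 :=
  Iff.rfl

lemma prod_pow_wtA {p n : ℕ} [NeZero p] (y : ZMod p → ℂ) (c : Fin n → ZMod p) :
    ∏ a : ZMod p, y a ^ wtA a c = ∏ i, y (c i) := by
  rw [← prod_fiberwise' univ c y]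
  simp only [prod_const, wtA]

open Classical in
lemma cwe_eq_sum_prod {p n : ℕ} [NeZero p] (S : Set (Fin n → ZMod p)) (x : ZMod p → ℂ) :
    cwe p n S x = ∑ c ∈ univ.filter (· ∈ S), ∏ i, x (c i) := by
  simp only [cwe, prod_pow_wtA]

lemma ZMod.exp_val_mul_val_eq_stdAddChar {N : ℕ} [NeZero N] (a b : ZMod N) :
    Complex.exp (2 * Real.pi * Complex.I * ((a.val : ℂ) * (b.val : ℂ)) / N) =
      ZMod.stdAddChar (a * b) := by
  have := ZMod.stdAddChar_coe (N := N) (a.val * b.val : ℕ)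
  push_cast at this
  simpa using this.symm

/-- MacWilliams identity: `W_{C^⊥}({x_a}) = |C|⁻¹ · W_C({x̃_a})` with
`x̃_a = Σ_b e^{2πi a b / p} x_b`. -/
theorem macWilliams_identity (p n : ℕ) [Fact p.Prime]
    (C : Submodule (ZMod p) (Fin n → ZMod p)) (x : ZMod p → ℂ) :
    cwe p n (dualCode p n (C : Set (Fin n → ZMod p))) x =
      (1 / (Nat.card C : ℂ)) *
        cwe p n (C : Set (Fin n → ZMod p))
          (fun a => ∑ b : ZMod p,
            Complex.exp (2 * Real.pi * Complex.I * ((a.val : ℂ) * (b.val : ℂ)) / p) * x b) := by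
  classical
  have hx : (fun a : ZMod p => ∑ b : ZMod p,
      Complex.exp (2 * Real.pi * Complex.I * ((a.val : ℂ) * (b.val : ℂ)) / p) * x b) =
        charTransform ZMod.stdAddChar x := by
    ext a
    simp only [ZMod.exp_val_mul_val_eq_stdAddChar, charTransform]
  have hC : (Nat.card C : ℂ) ≠ 0 := Nat.cast_ne_zero.mpr Nat.card_pos.ne'
  have transform_eq : cwe p n C (charTransform ZMod.stdAddChar x) =
      Nat.card C * cwe p n (dualCode p n C) x := by
    rw [cwe_eq_sum_prod, cwe_eq_sum_prod, sum_subtype _ (p := (· ∈ C)) (by simp),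
      sum_prod_charTransform (ZMod.isPrimitive_stdAddChar p)]
    simp only [mem_dualCode_iff, SetLike.mem_coe]
    congr
  rw [hx, transform_eq, one_div, inv_mul_cancel_left₀ hC]
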